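/- Let n ≥ 2 and F_1,…,F_n be finite fields with |F_1| ≤ ⋯ ≤ |F_n|, where F_1 has characteristic 2. Then the chromatic number and clique number of the total graph T(Γ(F_1 × ⋯ × F_n)) are both equal to |F_2|·|F_3|⋯|F_n|. -/

import Mathlib

/-- The total graph of a commutative ring: distinct `x, y` adjacent iff `x + y` is a
zero-divisor. -/
def totalGraph (R : Type*) [CommRing R] : SimpleGraph R :=
  SimpleGraph.fromRel (fun x y => ∃ z : R, z ≠ 0 ∧ (x + y) * z = 0)

namespace TotalGraphAux

open Finset

/-- Position-to-value map for row `t` of the table. -/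
def rowF (t a : ℕ) : ℕ := if a < t then a + 1 else if a = t then 0 else a

/-- Value-to-position map for row `t` (inverse of `rowF t`). -/
def rowG (t j : ℕ) : ℕ := if j = 0 then t else if j ≤ t then j - 1 else j

lemma rowF_rowG (t j : ℕ) : rowF t (rowG t j) = j := by
  unfold rowF rowG; split_ifs <;> omega

lemma rowG_lt {q t j : ℕ} (ht : t < q) (hj : j < q) : rowG t j < q := by
  unfold rowG; split_ifs <;> omega

/-- Enumeration of a field: `0, 1, g, g^2, ...` for a generator `g` of the units. -/
noncomputable def iota {K : Type*} [Field K] (g : Kˣ) (j : ℕ) : K :=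
  if j = 0 then 0 else (g : K) ^ (j - 1)

lemma iota_ne_zero {K : Type*} [Field K] (g : Kˣ) {j : ℕ} (hj : j ≠ 0) :
    iota g j ≠ 0 := by
  rw [iota, if_neg hj]
  exact pow_ne_zero _ g.ne_zero

lemma iota_sum_ne {K : Type*} [Field K] [Fintype K] (g : Kˣ)
    (hord : orderOf g = Fintype.card K - 1) (h2 : (2 : K) ≠ 0)
    {t s a : ℕ} (hts : t < s) (hs : s + 1 < Fintype.card K) :
    iota g (rowF t a) + iota g (rowF s a) ≠ 0 := by
  have hg0 : (g : K) ≠ 0 := g.ne_zero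
  rcases lt_trichotomy a t with h1 | h1 | h1
  · -- a < t < s : both entries are `iota (a+1)`
    have e1 : rowF t a = a + 1 := by unfold rowF; split_ifs <;> omega
    have e2 : rowF s a = a + 1 := by unfold rowF; split_ifs <;> omega
    rw [e1, e2, iota, if_neg (Nat.succ_ne_zero a)]
    intro hcon
    rw [← two_mul] at hcon
    exact mul_ne_zero h2 (pow_ne_zero _ hg0) hcon
  · -- a = t < s
    have e1 : rowF t a = 0 := by unfold rowF; split_ifs <;> omega
    have e2 : rowF s a = a + 1 := by unfold rowF; split_ifs <;> omega
    rw [e1, e2, show iota g 0 = 0 from if_pos rfl, zero_add]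
    exact iota_ne_zero g (Nat.succ_ne_zero a)
  · rcases lt_trichotomy a s with h2' | h2' | h2'
    · -- t < a < s
      have e1 : rowF t a = a := by unfold rowF; split_ifs <;> omega
      have e2 : rowF s a = a + 1 := by unfold rowF; split_ifs <;> omega
      have ha1 : a ≠ 0 := by omega
      rw [e1, e2, iota, if_neg ha1, iota, if_neg (Nat.succ_ne_zero a)]
      have hpow : (g : K) ^ (a + 1 - 1) = (g : K) ^ (a - 1) * g := by
        rw [show a + 1 - 1 = (a - 1) + 1 by omega, pow_succ]
      rw [hpow]
      intro hcon
      have hfac : (g : K) ^ (a - 1) * (1 + (g : K)) = 0 := by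
        rw [mul_add, mul_one]; exact hcon
      rcases mul_eq_zero.1 hfac with h | h
      · exact pow_ne_zero _ hg0 h
      · -- 1 + g = 0, so g = -1, so orderOf g ≤ 2, so card K ≤ 3; contradiction
        have hgneg : (g : K) = -1 := by linear_combination h
        have hsq : g ^ 2 = 1 := Units.ext (by
          rw [Units.val_pow_eq_pow_val, hgneg, Units.val_one]; ring)
        have hdvd : orderOf g ∣ 2 := orderOf_dvd_of_pow_eq_one hsq
        have hle : Fintype.card K - 1 ≤ 2 := hord ▸ Nat.le_of_dvd (by norm_num) hdvd
        omega
    · -- a = s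
      have e1 : rowF t a = a := by unfold rowF; split_ifs <;> omega
      have e2 : rowF s a = 0 := by unfold rowF; split_ifs <;> omega
      rw [e1, e2, show iota g 0 = 0 from if_pos rfl, add_zero]
      exact iota_ne_zero g (by omega)
    · -- s < a
      have e1 : rowF t a = a := by unfold rowF; split_ifs <;> omega
      have e2 : rowF s a = a := by unfold rowF; split_ifs <;> omega
      rw [e1, e2, iota, if_neg (by omega : a ≠ 0)]
      intro hcon
      rw [← two_mul] at hcon
      exact mul_ne_zero h2 (pow_ne_zero _ hg0) hcon

/-- Core combinatorial construction, odd characteristic case. -/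
lemma coreOdd (K : Type*) [Field K] [Fintype K] [DecidableEq K] (T : Type*) [Fintype T]
    (h2 : (2 : K) ≠ 0) (hT : Fintype.card T < Fintype.card K) :
    ∃ D : T → K → K, (∀ t, Function.Injective (D t)) ∧
      ∀ t s u v, t ≠ s → u + v = 0 → D t u ≠ D s v := by
  obtain ⟨g, hg⟩ := IsCyclic.exists_generator (α := Kˣ)
  have hord : orderOf g = Fintype.card K - 1 := by
    rw [orderOf_eq_card_of_forall_mem_zpowers hg, Nat.card_units, Nat.card_eq_fintype_card]
  have hinj : Function.Injective (fun j : Fin (Fintype.card K) => iota g (j : ℕ)) := by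
    intro j1 j2 h
    have hj1 := j1.is_lt
    have hj2 := j2.is_lt
    simp only [iota] at h
    split_ifs at h with ha hb hb
    · exact Fin.ext (by omega)
    · exact absurd h.symm (pow_ne_zero _ g.ne_zero)
    · exact absurd h (pow_ne_zero _ g.ne_zero)
    · have hu : g ^ ((j1 : ℕ) - 1) = g ^ ((j2 : ℕ) - 1) := Units.ext (by
        rw [Units.val_pow_eq_pow_val, Units.val_pow_eq_pow_val]; exact h)
      have hmem1 : ((j1 : ℕ) - 1) ∈ Set.Iio (orderOf g) := by
        rw [hord]; exact Set.mem_Iio.2 (by omega)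
      have hmem2 : ((j2 : ℕ) - 1) ∈ Set.Iio (orderOf g) := by
        rw [hord]; exact Set.mem_Iio.2 (by omega)
      have := pow_injOn_Iio_orderOf hmem1 hmem2 hu
      exact Fin.ext (by omega)
  have hbij : Function.Bijective (fun j : Fin (Fintype.card K) => iota g (j : ℕ)) :=
    (Fintype.bijective_iff_injective_and_card _).2 ⟨hinj, Fintype.card_fin _⟩
  set e := Equiv.ofBijective _ hbij with he
  set τ : T → ℕ := fun t => ((Fintype.equivFin T) t : ℕ) with hτ
  have hτlt : ∀ t, τ t < Fintype.card K :=
    fun t => lt_of_lt_of_le (Fin.is_lt _) (le_of_lt hT)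
  have hτs : ∀ t, τ t + 1 < Fintype.card K := by
    intro t
    have := Fin.is_lt ((Fintype.equivFin T) t)
    simp only [hτ]
    omega
  have hτinj : Function.Injective τ := fun a b h =>
    (Fintype.equivFin T).injective (Fin.ext h)
  refine ⟨fun t u => e ⟨rowG (τ t) ((e.symm u : Fin _) : ℕ),
      rowG_lt (hτlt t) (Fin.is_lt _)⟩, ?_, ?_⟩
  · intro t u v h
    have h1 := e.injective h
    have h2' : rowG (τ t) ((e.symm u : Fin _) : ℕ) = rowG (τ t) ((e.symm v : Fin _) : ℕ) :=
      congrArg Fin.val h1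
    have h3 : ((e.symm u : Fin _) : ℕ) = ((e.symm v : Fin _) : ℕ) := by
      have := congrArg (rowF (τ t)) h2'
      rwa [rowF_rowG, rowF_rowG] at this
    have h4 : e.symm u = e.symm v := Fin.ext h3
    simpa using congrArg e h4
  · intro t s u v hts huv heq
    have h1 := e.injective heq
    have h2' : rowG (τ t) ((e.symm u : Fin _) : ℕ) = rowG (τ s) ((e.symm v : Fin _) : ℕ) :=
      congrArg Fin.val h1
    set a : ℕ := rowG (τ t) ((e.symm u : Fin _) : ℕ) with ha
    have hu : u = iota g (rowF (τ t) a) := by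
      have : rowF (τ t) a = ((e.symm u : Fin _) : ℕ) := by rw [ha, rowF_rowG]
      rw [this]
      exact (e.apply_symm_apply u).symm
    have hv : v = iota g (rowF (τ s) a) := by
      have : rowF (τ s) a = ((e.symm v : Fin _) : ℕ) := by rw [h2', rowF_rowG]
      rw [this]
      exact (e.apply_symm_apply v).symm
    have hne : τ t ≠ τ s := fun hh => hts (hτinj hh)
    rcases Nat.lt_or_ge (τ t) (τ s) with hlt | hge
    · exact iota_sum_ne g hord h2 hlt (hτs s) (by rw [← hu, ← hv]; exact huv)
    · have hlt : τ s < τ t := by omega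
      exact iota_sum_ne g hord h2 hlt (hτs t) (by rw [← hv, ← hu, add_comm]; exact huv)

/-- Core combinatorial construction, characteristic two case. -/
lemma coreTwo (K : Type*) [Field K] [Fintype K] (T : Type*) [Fintype T]
    (h2 : (2 : K) = 0) (hT : Fintype.card T ≤ Fintype.card K) :
    ∃ D : T → K → K, (∀ t, Function.Injective (D t)) ∧
      ∀ t s u v, t ≠ s → u + v = 0 → D t u ≠ D s v := by
  obtain ⟨φ⟩ := Function.Embedding.nonempty_of_card_le hT
  refine ⟨fun t u => u + φ t, fun t u v h => add_right_cancel h, ?_⟩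
  intro t s u v hts huv heq
  have huu : u + u = 0 := by rw [← two_mul, h2, zero_mul]
  have hvu : v = u := add_left_cancel (huv.trans huu.symm)
  rw [hvu] at heq
  exact hts (φ.injective (add_left_cancel heq))

end TotalGraphAux

theorem stmt12 (n : ℕ) (hn : 2 ≤ n) (F : Fin n → Type*)
    [∀ i, Field (F i)] [∀ i, Fintype (F i)]
    (hmono : ∀ i j : Fin n, i ≤ j → Fintype.card (F i) ≤ Fintype.card (F j))
    (hchar : CharP (F ⟨0, by omega⟩) 2) :
    (totalGraph (∀ i, F i)).chromaticNumber =
        ((∏ i ∈ Finset.univ.erase (⟨0, by omega⟩ : Fin n), Fintype.card (F i) : ℕ) : ℕ∞) ∧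
    (totalGraph (∀ i, F i)).cliqueNum =
        ∏ i ∈ Finset.univ.erase (⟨0, by omega⟩ : Fin n), Fintype.card (F i) := by
  classical
  have h0 : 0 < n := by omega
  set i0 : Fin n := ⟨0, h0⟩ with hi0
  haveI hchar2 : CharP (F i0) 2 := hchar
  set N : ℕ := ∏ i ∈ Finset.univ.erase i0, Fintype.card (F i) with hN
  -- adjacency characterization
  have hzd : ∀ x y : ∀ i, F i, (∃ z : ∀ i, F i, z ≠ 0 ∧ (x + y) * z = 0) ↔
      ∃ i, x i + y i = 0 := by
    intro x y
    constructor
    · rintro ⟨z, hz, hmul⟩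
      obtain ⟨i, hi⟩ := Function.ne_iff.1 hz
      refine ⟨i, ?_⟩
      have hmi := congrFun hmul i
      simp only [Pi.mul_apply, Pi.add_apply, Pi.zero_apply] at hmi hi
      rcases mul_eq_zero.1 hmi with h | h
      · exact h
      · exact absurd h hi
    · rintro ⟨i, hi⟩
      refine ⟨fun j => if j = i then 1 else 0, ?_, ?_⟩
      · intro h
        have := congrFun h i
        simp at this
      · funext j
        by_cases hj : j = i
        · subst hj; simp [hi]
        · simp [hj]
  have hadj : ∀ x y : ∀ i, F i, (totalGraph (∀ i, F i)).Adj x y ↔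
      (x ≠ y ∧ ∃ i, x i + y i = 0) := by
    intro x y
    simp only [totalGraph, SimpleGraph.fromRel_adj]
    constructor
    · rintro ⟨hne, h | h⟩
      · exact ⟨hne, (hzd x y).1 h⟩
      · refine ⟨hne, ?_⟩
        obtain ⟨i, hi⟩ := (hzd y x).1 h
        exact ⟨i, by rw [add_comm]; exact hi⟩
    · rintro ⟨hne, hex⟩
      exact ⟨hne, Or.inl ((hzd x y).2 hex)⟩
  -- per-coordinate coloring functions
  have hD : ∀ i : Fin n, i ≠ i0 → ∃ D : F i0 → F i → F i,
      (∀ t, Function.Injective (D t)) ∧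
      ∀ t s u v, t ≠ s → u + v = 0 → D t u ≠ D s v := by
    intro i hi
    have hle : Fintype.card (F i0) ≤ Fintype.card (F i) :=
      hmono i0 i (by simp [Fin.le_def, hi0])
    by_cases h2 : (2 : F i) = 0
    · exact TotalGraphAux.coreTwo (F i) (F i0) h2 hle
    · apply TotalGraphAux.coreOdd (F i) (F i0) h2
      rcases lt_or_eq_of_le hle with h | h
      · exact h
      · exfalso
        apply h2
        have hC0 : ringChar (F i0) = 2 := ringChar.eq (F i0) 2
        have hmod : Fintype.card (F i) % 2 = 0 := by
          rw [← h]
          exact (FiniteField.even_card_iff_char_two).1 hC0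
        have hCi : ringChar (F i) = 2 := (FiniteField.even_card_iff_char_two).2 hmod
        haveI : CharP (F i) 2 := ringChar.of_eq hCi
        have := CharP.cast_eq_zero (F i) 2
        simpa using this
  choose D hA hB using hD
  -- the coloring
  have hcol : ∀ x y : ∀ i, F i, (totalGraph (∀ i, F i)).Adj x y →
      (fun (i : {i : Fin n // i ≠ i0}) => D i.1 i.2 (x i0) (x i.1)) ≠
      (fun (i : {i : Fin n // i ≠ i0}) => D i.1 i.2 (y i0) (y i.1)) := by
    intro x y hxy hcc
    rw [hadj] at hxy
    obtain ⟨hne, i, hi⟩ := hxy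
    by_cases h00 : x i0 = y i0
    · obtain ⟨j, hj⟩ := Function.ne_iff.1 hne
      have hji0 : j ≠ i0 := by
        rintro rfl
        exact hj h00
      have hc := congrFun hcc ⟨j, hji0⟩
      simp only at hc
      rw [h00] at hc
      exact hj (hA j hji0 (y i0) hc)
    · have hii0 : i ≠ i0 := by
        rintro rfl
        apply h00
        have hxx : x i0 + x i0 = 0 := CharTwo.add_self_eq_zero (x i0)
        -- from x i0 + y i0 = 0 and x i0 + x i0 = 0 we get y i0 = x i0
        exact add_left_cancel (hxx.trans hi.symm)
      exact hB i hii0 (x i0) (y i0) (x i) (y i) h00 hi (congrFun hcc ⟨i, hii0⟩)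
  -- cardinality of the color space
  have hcards : Fintype.card (∀ i : {i : Fin n // i ≠ i0}, F i.1) = N := by
    rw [Fintype.card_pi, hN]
    exact (Finset.prod_subtype (p := fun i : Fin n => i ≠ i0) (Finset.univ.erase i0)
      (fun x => by simp [Finset.mem_erase]) (fun i => Fintype.card (F i))).symm
  have hcolorable : (totalGraph (∀ i, F i)).Colorable N := by
    have hc : (totalGraph (∀ i, F i)).Coloring (∀ i : {i : Fin n // i ≠ i0}, F i.1) :=
      SimpleGraph.Coloring.mk
        (fun x (i : {i : Fin n // i ≠ i0}) => D i.1 i.2 (x i0) (x i.1))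
        (fun {x y} h => hcol x y h)
    have := hc.colorable
    rwa [hcards] at this
  -- the clique
  set S : Finset (∀ i, F i) := Finset.univ.filter (fun x => x i0 = 0) with hS
  have hSclique : (totalGraph (∀ i, F i)).IsClique (S : Set (∀ i, F i)) := by
    intro x hx y hy hne
    simp only [hS, Finset.coe_filter, Set.mem_setOf_eq, Finset.mem_univ, true_and] at hx hy
    rw [hadj]
    exact ⟨hne, i0, by rw [hx, hy, add_zero]⟩
  have hScard : S.card = N := by
    have h1 : Fintype.card {x : ∀ i, F i // x i0 = 0} = S.card := by
      rw [hS]; exact Fintype.card_subtype _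
    have eqv : {x : ∀ i, F i // x i0 = 0} ≃ (∀ i : {i : Fin n // i ≠ i0}, F i.1) :=
      { toFun := fun x i => x.1 i.1
        invFun := fun y => ⟨fun i => if h : i = i0 then 0 else y ⟨i, h⟩, by simp⟩
        left_inv := fun x => Subtype.ext (funext fun i => by
          by_cases h : i = i0
          · subst h; simp [x.2.symm]
          · simp [h])
        right_inv := fun y => funext fun i => by
          simp [i.2] }
    rw [← h1, Fintype.card_congr eqv, hcards]
  have hSN : (totalGraph (∀ i, F i)).IsNClique N S := ⟨hSclique, hScard⟩
  constructor
  · show (totalGraph (∀ i, F i)).chromaticNumber = (N : ℕ∞)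
    refine le_antisymm (hcolorable.chromaticNumber_le) ?_
    have := hSclique.card_le_chromaticNumber
    rwa [hScard] at this
  · show (totalGraph (∀ i, F i)).cliqueNum = N
    refine le_antisymm ?_ ?_
    · by_contra hlt
      push_neg at hlt
      obtain ⟨s, hs⟩ := (totalGraph (∀ i, F i)).exists_isNClique_cliqueNum
      exact (hcolorable.cliqueFree hlt) s hs
    · have := SimpleGraph.IsClique.card_le_cliqueNum
        (G := totalGraph (∀ i, F i)) (t := S) (tc := hSclique)
      rwa [hScard] at this
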